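/- arXiv:2207.02684 — 4 statements merged into one kernel-verified Lean document; each statement's English description precedes it below -/
import Mathlib

section
/- With d as above (entries over ℝ or ℂ), the exponential exp(d) = Σ_{m≥0} d^m/m! is the upper triangular matrix with diagonal entries e^α, e^{2α}, …, e^{2^{n-1}α}, last-column entries β' = β·(e^{2^{n-1}α} - e^α)/((2^{n-1}-1)α) (interpreted as β when α = 0) in the first row, (e^{2^{i-1}α} - e^{2^{n-1}α}) a_{i,n} in row i for 2 ≤ i ≤ n-2, and zeros elsewhere. -/
/-!
Write `d = diagonal v + c e_lᵀ` with `v i = 2^i α`, `l` the last index and `c l = 0`.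
If `α = 0`, then `d` squares to zero and `exp d = 1 + d`. Otherwise `v i ≠ v l` for `i ≠ l`, and
conjugating by the unipotent matrix `1 + w e_lᵀ`, `w i = c i / (v l - v i)`, diagonalizes `d`.
Since `exp` commutes with conjugation, the last column of `exp d` carries the divided differences
`c i (e^{v l} - e^{v i}) / (v l - v i)`.
-/

theorem NormedSpace.exp_eq_one_add_of_mul_self_eq_zero {𝔸 : Type*} [Ring 𝔸] [Algebra ℚ 𝔸]
    [TopologicalSpace 𝔸] [IsTopologicalRing 𝔸] {x : 𝔸} (hx : x * x = 0) :
    NormedSpace.exp x = 1 + x := by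
  have hpow : ∀ k, 2 ≤ k → x ^ k = 0 := fun k hk => by
    obtain ⟨k, rfl⟩ := Nat.exists_eq_add_of_le' hk
    rw [pow_add, pow_two, hx, mul_zero]
  rw [NormedSpace.exp_eq_tsum_rat]
  beta_reduce
  rw [tsum_eq_sum (s := Finset.range 2) fun k hk => by
    rw [hpow k (by simp at hk; omega), smul_zero]]
  simp [Finset.sum_range_succ]

namespace Matrix

variable {m R : Type*} [DecidableEq m]

section CommRing

variable [CommRing R]

theorem of_ite_eq_diagonal_add_vecMulVec_single (x y : m → R) (l : m) :
    (of fun i j => if i = j then x i else if j = l then y i else 0) =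
      diagonal x + vecMulVec (Function.update y l 0) (Pi.single l 1) := by
  ext i j
  by_cases hij : i = j
  · subst hij
    by_cases hil : i = l <;> simp [hil, vecMulVec_apply]
  · by_cases hjl : j = l
    · subst hjl
      simp [hij, vecMulVec_apply]
    · simp [hij, hjl, vecMulVec_apply]

variable [Fintype m]

theorem vecMulVec_single_mul_self {w : m → R} {l : m} (hw : w l = 0) :
    vecMulVec w (Pi.single l 1) * vecMulVec w (Pi.single l 1) = 0 := by
  simp [vecMulVec_mul_vecMulVec, hw]

theorem one_add_vecMulVec_single_mul_diagonal_mul_one_sub {w : m → R} {l : m} (hw : w l = 0)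
    (v : m → R) :
    (1 + vecMulVec w (Pi.single l 1)) * diagonal v * (1 - vecMulVec w (Pi.single l 1)) =
      diagonal v + vecMulVec (fun i => (v l - v i) * w i) (Pi.single l 1) := by
  set W := vecMulVec w (Pi.single l 1)
  have hWD : W * diagonal v = v l • W := by
    ext i j
    by_cases hj : j = l
    · subst hj; simp [W, mul_diagonal, vecMulVec_apply, mul_comm]
    · simp [W, mul_diagonal, vecMulVec_apply, hj]
  have hDW : diagonal v * W = vecMulVec (fun i => v i * w i) (Pi.single l 1) := by
    ext i j
    simp [W, diagonal_mul, vecMulVec_apply, mul_assoc]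
  calc (1 + W) * diagonal v * (1 - W)
      = diagonal v + W * diagonal v - diagonal v * W - W * diagonal v * W := by noncomm_ring
    _ = _ := by
      rw [hWD, hDW, smul_mul_assoc, vecMulVec_single_mul_self hw, smul_zero, sub_zero]
      ext i j
      simp only [W, add_apply, sub_apply, smul_apply, vecMulVec_apply, smul_eq_mul]
      ring

end CommRing

open NormedSpace in
theorem exp_diagonal_add_vecMulVec_single [Fintype m] [NormedField R] [NormedAlgebra ℚ R]
    [CompleteSpace R] {v c : m → R} {l : m} (hc : c l = 0) (hv : ∀ i ≠ l, v i ≠ v l) :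
    exp (diagonal v + vecMulVec c (Pi.single l 1)) =
      diagonal (fun i => exp (v i)) +
        vecMulVec (fun i => c i * (exp (v l) - exp (v i)) / (v l - v i)) (Pi.single l 1) := by
  set w : m → R := fun i => c i / (v l - v i)
  -- `w l = c l / 0`, which is `0` in Lean
  have hw : w l = 0 := by simp [w]
  have hc_eq : (fun i => (v l - v i) * w i) = c := funext fun i => by
    by_cases hi : i = l
    · subst hi; simp [hc]
    · exact mul_div_cancel₀ _ (sub_ne_zero.2 (hv i hi).symm)
  set W := vecMulVec w (Pi.single l 1)
  have hinv : (1 + W) * (1 - W) = 1 := by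
    rw [add_mul, mul_sub, mul_sub, vecMulVec_single_mul_self hw]; noncomm_ring
  have hinv' : (1 + W)⁻¹ = 1 - W := inv_eq_right_inv hinv
  calc exp (diagonal v + vecMulVec c (Pi.single l 1))
      = exp ((1 + W) * diagonal v * (1 + W)⁻¹) := by
        rw [hinv', one_add_vecMulVec_single_mul_diagonal_mul_one_sub hw, hc_eq]
    _ = (1 + W) * diagonal (fun i => exp (v i)) * (1 + W)⁻¹ := by
        rw [exp_conj _ _ ((isUnit_iff_isUnit_det _).2 (isUnit_det_of_right_inverse hinv)),
          exp_diagonal, Pi.exp_def]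
    _ = _ := by
        rw [hinv', one_add_vecMulVec_single_mul_diagonal_mul_one_sub hw]
        congr 2
        funext i
        ring

end Matrix

open Matrix

-- The paper's `n × n` matrix with rows `1, …, n` is indexed here by `Fin (n + 1)`, paper row `i + 1`
-- being index `i`; so `a_{i+1,n}` is `a i`.
theorem derivation_matrix_exp_general {n : ℕ}
    (α β : ℝ) (a : Fin (n+1) → ℝ)
    (d : Matrix (Fin (n+1)) (Fin (n+1)) ℝ)
    (hd : d = Matrix.of fun i j : Fin (n+1) =>
      if i = j then (2 : ℝ) ^ (i : ℕ) * α
      else if j = Fin.last n then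
        (if i = 0 then β else ((2 : ℝ) ^ (i : ℕ) - 2 ^ n) * α * a i)
      else 0) :
    NormedSpace.exp d = Matrix.of fun i j : Fin (n+1) =>
      if i = j then Real.exp ((2 : ℝ) ^ (i : ℕ) * α)
      else if j = Fin.last n then
        (if i = 0 then
          (if α = 0 then β
           else β * (Real.exp ((2 : ℝ) ^ n * α) - Real.exp α) / (((2 : ℝ) ^ n - 1) * α))
         else (Real.exp ((2 : ℝ) ^ (i : ℕ) * α) - Real.exp ((2 : ℝ) ^ n * α)) * a i)
      else 0 := by
  rw [hd, of_ite_eq_diagonal_add_vecMulVec_single, of_ite_eq_diagonal_add_vecMulVec_single]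
  rcases eq_or_ne α 0 with rfl | hα
  · simp only [mul_zero, diagonal_zero, zero_mul, zero_add, Real.exp_zero, diagonal_one,
      ↓reduceIte, sub_self]
    exact NormedSpace.exp_eq_one_add_of_mul_self_eq_zero
      (vecMulVec_single_mul_self (Function.update_self _ _ _))
  · have hlt (i : Fin (n + 1)) (hi : i ≠ Fin.last n) : (2 : ℝ) ^ (i : ℕ) < 2 ^ n :=
      pow_lt_pow_right₀ one_lt_two (Fin.val_lt_last hi)
    rw [exp_diagonal_add_vecMulVec_single (c := Function.update _ _ 0)
      (Function.update_self _ _ _) fun i hi => by simpa [hα] using (hlt i hi).ne]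
    congr 2
    · funext i
      rw [Real.exp_eq_exp_ℝ]
    · funext i
      rcases eq_or_ne i (Fin.last n) with rfl | hi
      · simp
      have hne : (2 : ℝ) ^ n - 2 ^ (i : ℕ) ≠ 0 := sub_ne_zero.2 (hlt i hi).ne'
      rw [Function.update_of_ne hi, Function.update_of_ne hi, ← Real.exp_eq_exp_ℝ, Fin.val_last]
      split_ifs with hi0
      · subst hi0
        simp only [Fin.val_zero, pow_zero, one_mul] at hne ⊢
        field_simp
      · field_simp
        ring

/-- the matrix exponential of the triangular derivation matrix `d`
(over ℝ, dimension `n+1`, 0-based indices: diagonal `2^i α`, last column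
`β, (2^i - 2^n)α a_i, 2^n α`) is upper triangular with diagonal `e^{2^i α}`,
`(1,n)` entry `β(e^{2^n α} - e^α)/((2^n - 1)α)` (read as `β` when `α = 0`),
`(i,n)` entries `(e^{2^i α} - e^{2^n α}) a_i`, and zeros elsewhere. -/
theorem derivation_matrix_exp {n : ℕ} (hn : 2 ≤ n)
    (α β : ℝ) (a : Fin (n+1) → ℝ)
    (d : Matrix (Fin (n+1)) (Fin (n+1)) ℝ)
    (hd : d = Matrix.of fun i j : Fin (n+1) =>
      if i = j then (2 : ℝ) ^ (i : ℕ) * α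
      else if j = Fin.last n then
        (if i = 0 then β else ((2 : ℝ) ^ (i : ℕ) - 2 ^ n) * α * a i)
      else 0) :
    NormedSpace.exp d = Matrix.of fun i j : Fin (n+1) =>
      if i = j then Real.exp ((2 : ℝ) ^ (i : ℕ) * α)
      else if j = Fin.last n then
        (if i = 0 then
          (if α = 0 then β
           else β * (Real.exp ((2 : ℝ) ^ n * α) - Real.exp α) / (((2 : ℝ) ^ n - 1) * α))
         else (Real.exp ((2 : ℝ) ^ (i : ℕ) * α) - Real.exp ((2 : ℝ) ^ n * α)) * a i)
      else 0 :=
  derivation_matrix_exp_general α β a d hd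
end

section
/- The set of matrices of the form exp(d_{α,β}) (upper triangular with diagonal entries e^{2^{i-1}α} and last column as in the exponential formula) is closed under matrix multiplication: for any α₁, β₁, α₂, β₂ ∈ ℝ there exist α, β ∈ ℝ with exp(d_{α₁,β₁})·exp(d_{α₂,β₂}) = exp(d_{α,β}), where α = α₁ + α₂. -/
open Matrix

/-- The derivation matrix `d_{α,β}`: dimension `n+1`, 0-based indices, diagonal
`(α, 2α, …, 2^n α)`, last column `(β, (2-2^n)α a_1, …, (2^{n-1}-2^n)α a_{n-1}, 2^n α)`,
zeros elsewhere. -/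
def derMat (n : ℕ) (a : Fin (n+1) → ℝ) (α β : ℝ) : Matrix (Fin (n+1)) (Fin (n+1)) ℝ :=
  Matrix.of fun i j : Fin (n+1) =>
    if i = j then (2 : ℝ) ^ (i : ℕ) * α
    else if j = Fin.last n then
      (if i = 0 then β else ((2 : ℝ) ^ (i : ℕ) - 2 ^ n) * α * a i)
    else 0

/-! Write `d_{α,β} = α • C + β • E` with `C = d_{1,0}` and `E` the matrix unit at `(0, n)`; then
`C * E = E`, `E * C = 2 ^ n • E` and `E * E = 0`, and nothing else is needed. For `α ≠ 0`, `d_{α,β}`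
is the conjugate of `α • C` by the unit `1 + t • E`, `t = β / ((2 ^ n - 1) α)`; for `α = 0` the
exponential series of `β • E` stops after two terms. Either way
`exp d_{α,β} = exp (α • C) + (c_α β) • E` with `c_α ≠ 0`, so the product of two such exponentials
is `exp ((α₁ + α₂) • C)` plus a multiple of `E`, and dividing that multiple by `c_{α₁+α₂}`
gives `β`. -/

theorem one_add_smul_mul_mul_one_sub_smul {R 𝔸 : Type*} [CommRing R] [Ring 𝔸] [Algebra R 𝔸]
    {X E : 𝔸} {p q : R} (hXE : X * E = p • E) (hEX : E * X = q • E) (hEE : E * E = 0) (t : R) :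
    (1 + t • E) * X * (1 - t • E) = X + (t * (q - p)) • E := by
  simp only [add_mul, one_mul, mul_sub, mul_one, smul_mul_assoc, mul_smul_comm, hXE, hEX, hEE,
    smul_zero, smul_smul]
  module

open scoped Nat

namespace NormedSpace

variable {𝔸 : Type*} [NormedRing 𝔸] [NormedAlgebra ℝ 𝔸] [CompleteSpace 𝔸]

theorem exp_mul_of_mul_eq_smul {A E : 𝔸} {p : ℝ} (h : A * E = p • E) :
    exp A * E = Real.exp p • E := by
  have hpow (k : ℕ) : A ^ k * E = p ^ k • E := by
    induction k with
    | zero => simp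
    | succ k ih => rw [pow_succ', mul_assoc, ih, mul_smul_comm, h, smul_smul, pow_succ]
  have hA := (exp_series_hasSum_exp' (𝕂 := ℝ) A).mul_right E
  simp only [smul_mul_assoc, hpow, smul_smul] at hA
  refine hA.unique ?_
  simpa only [Real.exp_eq_exp_ℝ, smul_eq_mul] using (exp_series_hasSum_exp' (𝕂 := ℝ) p).smul_const E

theorem mul_exp_of_mul_eq_smul {A E : 𝔸} {q : ℝ} (h : E * A = q • E) :
    E * exp A = Real.exp q • E := by
  have hpow (k : ℕ) : E * A ^ k = q ^ k • E := by
    induction k with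
    | zero => simp
    | succ k ih => rw [pow_succ, ← mul_assoc, ih, smul_mul_assoc, h, smul_smul, pow_succ]
  have hA := (exp_series_hasSum_exp' (𝕂 := ℝ) A).mul_left E
  simp only [mul_smul_comm, hpow, smul_smul] at hA
  refine hA.unique ?_
  simpa only [Real.exp_eq_exp_ℝ, smul_eq_mul] using (exp_series_hasSum_exp' (𝕂 := ℝ) q).smul_const E

theorem exp_eq_one_add_of_mul_self_eq_zero_s5 {E : 𝔸} (h : E * E = 0) : exp E = 1 + E := by
  have hpow {k : ℕ} (hk : k ∉ Finset.range 2) : (k !⁻¹ : ℝ) • E ^ k = 0 := by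
    rw [Finset.mem_range, not_lt] at hk
    rw [pow_eq_zero_of_le hk (by rwa [sq]), smul_zero]
  refine (exp_series_hasSum_exp' (𝕂 := ℝ) E).unique ?_
  simpa [Finset.sum_range_succ] using hasSum_sum_of_ne_finset_zero fun k hk => hpow hk

variable {A E : 𝔸} {p q : ℝ}

theorem exists_exp_smul_add_smul_eq (hAE : A * E = p • E) (hEA : E * A = q • E) (hEE : E * E = 0)
    (hpq : p ≠ q) (α : ℝ) :
    ∃ c ≠ 0, ∀ β : ℝ, exp (α • A + β • E) = exp (α • A) + (c * β) • E := by
  rcases eq_or_ne α 0 with rfl | hα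
  · refine ⟨1, one_ne_zero, fun β => ?_⟩
    rw [zero_smul, zero_add, exp_zero, one_mul,
      exp_eq_one_add_of_mul_self_eq_zero_s5 (by rw [smul_mul_smul_comm, hEE, smul_zero])]
  have hαAE : (α • A) * E = (α * p) • E := by rw [smul_mul_assoc, hAE, smul_smul]
  have hEαA : E * (α • A) = (α * q) • E := by rw [mul_smul_comm, hEA, smul_smul]
  have hd : (q - p) * α ≠ 0 := mul_ne_zero (sub_ne_zero.2 hpq.symm) hα
  have hexp : Real.exp (α * q) - Real.exp (α * p) ≠ 0 :=
    sub_ne_zero.2 fun h => hpq (mul_left_cancel₀ hα (Real.exp_injective h)).symm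
  refine ⟨(Real.exp (α * q) - Real.exp (α * p)) / ((q - p) * α), div_ne_zero hexp hd, fun β => ?_⟩
  obtain ⟨t, rfl⟩ : ∃ t, t * ((q - p) * α) = β := ⟨_, div_mul_cancel₀ β hd⟩
  let u : 𝔸ˣ := ⟨1 + t • E, 1 - t • E, by simp [mul_sub, add_mul, hEE],
    by simp [sub_mul, mul_add, hEE]⟩
  have hconj : α • A + (t * ((q - p) * α)) • E = u * (α • A) * ↑u⁻¹ := by
    change _ = (1 + t • E) * (α • A) * (1 - t • E)
    rw [one_add_smul_mul_mul_one_sub_smul hαAE hEαA hEE t]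
    congr 2
    ring
  let +nondep : NormedAlgebra ℚ 𝔸 := .restrictScalars ℚ ℝ 𝔸
  rw [hconj, exp_units_conj]
  change (1 + t • E) * exp (α • A) * (1 - t • E) = _
  rw [one_add_smul_mul_mul_one_sub_smul (exp_mul_of_mul_eq_smul hαAE)
    (mul_exp_of_mul_eq_smul hEαA) hEE t]
  field_simp

theorem exists_exp_smul_add_smul_mul_exp_eq (hAE : A * E = p • E) (hEA : E * A = q • E)
    (hEE : E * E = 0) (hpq : p ≠ q) (α₁ β₁ α₂ β₂ : ℝ) :
    ∃ β : ℝ, exp (α₁ • A + β₁ • E) * exp (α₂ • A + β₂ • E) = exp ((α₁ + α₂) • A + β • E) := by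
  obtain ⟨c₁, -, hc₁⟩ := exists_exp_smul_add_smul_eq hAE hEA hEE hpq α₁
  obtain ⟨c₂, -, hc₂⟩ := exists_exp_smul_add_smul_eq hAE hEA hEE hpq α₂
  obtain ⟨c, hc, hc'⟩ := exists_exp_smul_add_smul_eq hAE hEA hEE hpq (α₁ + α₂)
  have h₁E : exp (α₁ • A) * E = Real.exp (α₁ * p) • E :=
    exp_mul_of_mul_eq_smul (by rw [smul_mul_assoc, hAE, smul_smul])
  have hE₂ : E * exp (α₂ • A) = Real.exp (α₂ * q) • E :=
    mul_exp_of_mul_eq_smul (by rw [mul_smul_comm, hEA, smul_smul])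
  let +nondep : NormedAlgebra ℚ 𝔸 := .restrictScalars ℚ ℝ 𝔸
  have h₁₂ : exp (α₁ • A) * exp (α₂ • A) = exp ((α₁ + α₂) • A) := by
    rw [add_smul, exp_add_of_commute (((Commute.refl A).smul_left α₁).smul_right α₂)]
  refine ⟨(c₂ * β₂ * Real.exp (α₁ * p) + c₁ * β₁ * Real.exp (α₂ * q)) / c, ?_⟩
  rw [hc₁, hc₂, hc', mul_div_cancel₀ _ hc, ← h₁₂]
  simp only [add_mul, mul_add, smul_mul_assoc, mul_smul_comm, h₁E, hE₂, hEE, smul_smul,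
    smul_zero]
  module

end NormedSpace

section derMat

variable {n : ℕ} (a : Fin (n+1) → ℝ)

theorem derMat_eq_smul_add_smul_single [NeZero n] (α β : ℝ) :
    derMat n a α β = α • derMat n a 1 0 + β • single 0 (Fin.last n) 1 := by
  have h0 : (0 : Fin (n + 1)) ≠ Fin.last n := Fin.last_pos'.ne
  ext i j
  simp only [derMat, of_apply, Matrix.add_apply, Matrix.smul_apply, single_apply, smul_eq_mul]
  split_ifs <;> grind

theorem derMat_one_zero_mul_single [NeZero n] :
    derMat n a 1 0 * single 0 (Fin.last n) 1 = single 0 (Fin.last n) 1 := by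
  ext i j
  by_cases hj : j = Fin.last n
  · subst hj
    by_cases hi : i = 0 <;> simp [derMat, hi, eq_comm, NeZero.ne n]
  · simp [hj, single_apply_of_col_ne _ _ (Ne.symm hj)]

theorem single_mul_derMat_one_zero :
    single 0 (Fin.last n) 1 * derMat n a 1 0 = (2 ^ n : ℝ) • single 0 (Fin.last n) 1 := by
  ext i j
  by_cases hi : i = 0
  · subst hi
    by_cases hj : j = Fin.last n <;> simp [derMat, hj, eq_comm]
  · simp [hi, single_apply_of_row_ne (Ne.symm hi)]

theorem single_zero_last_mul_self [NeZero n] :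
    single (0 : Fin (n + 1)) (Fin.last n) (1 : ℝ) * single 0 (Fin.last n) 1 = 0 :=
  single_mul_single_of_ne 1 0 (Fin.last n) 0 Fin.last_pos'.ne' 1

end derMat

/-- the set `{exp (d_{α,β})}` is closed under matrix multiplication;
for the product one may take `α = α₁ + α₂`. -/
theorem exp_der_closed_under_mul {n : ℕ} (hn : 2 ≤ n) (a : Fin (n+1) → ℝ) :
    ∀ α₁ β₁ α₂ β₂ : ℝ, ∃ β : ℝ,
      NormedSpace.exp (derMat n a α₁ β₁) * NormedSpace.exp (derMat n a α₂ β₂)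
        = NormedSpace.exp (derMat n a (α₁ + α₂) β) := by
  intro α₁ β₁ α₂ β₂
  have : NeZero n := ⟨by omega⟩
  obtain ⟨β, hβ⟩ := open scoped Matrix.Norms.Operator in
    NormedSpace.exists_exp_smul_add_smul_mul_exp_eq
      ((derMat_one_zero_mul_single a).trans (one_smul ℝ _).symm)
      (single_mul_derMat_one_zero a) single_zero_last_mul_self
      (one_lt_pow₀ one_lt_two (NeZero.ne n)).ne α₁ β₁ α₂ β₂
  refine ⟨β, ?_⟩
  rw [derMat_eq_smul_add_smul_single a α₁ β₁, derMat_eq_smul_add_smul_single a α₂ β₂,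
    derMat_eq_smul_add_smul_single a (α₁ + α₂) β]
  exact hβ
end

section
/- Let d be a derivation of an evolution algebra E. If d(e_1) = β e_n and d(e_i) = 0 for i ≥ 2 and e_n² = 0, then exp(t·d) is an algebra automorphism of E for every t ∈ K. -/
open Matrix

/-- Evolution product with structure matrix `A`. -/
def evolMul11 {N : ℕ} {K : Type*} [Field K] (A : Matrix (Fin N) (Fin N) K)
    (x y : Fin N → K) : Fin N → K :=
  fun j => ∑ i, A i j * (x i * y i)

/-- if `d` is a derivation with `d e_1 = β e_n`, `d e_i = 0` (`i ≥ 2`),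
and `e_n² = 0` (strictly upper triangular structure matrix), then
`exp(t d) = I + t d` (valid since `d² = 0`) is an algebra automorphism for every `t`. -/
theorem exp_td_automorphism {n : ℕ} (hn : 2 ≤ n) {K : Type*} [Field K] [CharZero K]
    (A : Matrix (Fin (n+1)) (Fin (n+1)) K)
    (hA : ∀ i j : Fin (n+1), (j : ℕ) ≤ (i : ℕ) → A i j = 0)
    (hlast : ∀ k, A (Fin.last n) k = 0)
    (β : K) (d : Matrix (Fin (n+1)) (Fin (n+1)) K)
    (hder : ∀ u v : Fin (n+1) → K,
      d.mulVec (evolMul11 A u v)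
        = evolMul11 A (d.mulVec u) v + evolMul11 A u (d.mulVec v))
    (hd1 : d.mulVec (Pi.single 0 1) = β • (Pi.single (Fin.last n) 1 : Fin (n+1) → K))
    (hdi : ∀ i : Fin (n+1), i ≠ 0 → d.mulVec (Pi.single i 1) = 0) :
    ∀ t : K,
      Function.Bijective ((1 + t • d).mulVec : (Fin (n+1) → K) → (Fin (n+1) → K)) ∧
      ∀ x y : Fin (n+1) → K,
        (1 + t • d).mulVec (evolMul11 A x y)
          = evolMul11 A ((1 + t • d).mulVec x) ((1 + t • d).mulVec y) := by
  -- entries of d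
  have hlast0 : (Fin.last n : Fin (n+1)) ≠ 0 := by
    simp [Fin.ext_iff, Fin.val_last]; omega
  have hent : ∀ j k : Fin (n+1),
      d j k = if j = Fin.last n ∧ k = 0 then β else 0 := by
    intro j k
    by_cases hk : k = 0
    · subst hk
      have := congrFun hd1 j
      simp [Matrix.mulVec_single] at this
      rw [this]
      by_cases hj : j = Fin.last n
      · subst hj; simp [Pi.single_apply]
      · simp [Pi.single_apply, hj, Ne.symm hj]
    · have := congrFun (hdi k hk) j
      simp [Matrix.mulVec_single] at this
      simp [this, hk]
  -- explicit form of d.mulVec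
  have hdx : ∀ x : Fin (n+1) → K,
      d.mulVec x = (β * x 0) • (Pi.single (Fin.last n) 1 : Fin (n+1) → K) := by
    intro x
    funext j
    simp only [Matrix.mulVec, dotProduct, Pi.smul_apply, smul_eq_mul]
    rw [Finset.sum_eq_single 0]
    · rw [hent]
      by_cases hj : j = Fin.last n <;> simp [hj, Pi.single_apply, mul_comm]
    · intro k _ hk; rw [hent]; simp [hk]
    · simp
  have hdd : d * d = 0 := by
    ext j k
    rw [Matrix.mul_apply]
    apply Finset.sum_eq_zero
    intro m _
    rw [hent, hent]
    by_cases h1 : m = 0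
    · subst h1
      have : (0 : Fin (n+1)) ≠ Fin.last n := Ne.symm hlast0
      simp [this]
    · simp [h1]
  intro t
  constructor
  · -- bijectivity: inverse is (1 - t • d).mulVec
    have hmul : (1 + t • d) * (1 - t • d) = 1 := by
      simp [mul_sub, add_mul, Matrix.smul_mul, Matrix.mul_smul, hdd]
    have hmul' : (1 - t • d) * (1 + t • d) = 1 := by
      simp [mul_add, sub_mul, Matrix.smul_mul, Matrix.mul_smul, hdd]
    refine Function.bijective_iff_has_inverse.mpr ⟨(1 - t • d).mulVec, ?_, ?_⟩
    · intro x
      rw [Matrix.mulVec_mulVec, hmul', Matrix.one_mulVec]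
    · intro x
      rw [Matrix.mulVec_mulVec, hmul, Matrix.one_mulVec]
  · intro x y
    have hexp : ∀ z : Fin (n+1) → K,
        (1 + t • d).mulVec z = z + t • d.mulVec z := by
      intro z
      rw [Matrix.add_mulVec, Matrix.one_mulVec, Matrix.smul_mulVec]
    rw [hexp, hexp, hexp, hder]
    -- bilinearity expansion
    have hzero : evolMul11 A (d.mulVec x) (t • d.mulVec y) = 0 := by
      funext j
      simp only [evolMul11, Pi.zero_apply]
      apply Finset.sum_eq_zero
      intro i _
      by_cases hi : i = Fin.last n
      · subst hi; simp [hlast]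
      · rw [hdx]
        simp [Pi.single_apply, hi]
    funext j
    have hz := congrFun hzero j
    simp only [evolMul11, Pi.add_apply, Pi.smul_apply, smul_eq_mul, Pi.zero_apply] at *
    have key : ∑ i, A i j * ((x i + t * (d.mulVec x) i) * (y i + t * (d.mulVec y) i))
        = ∑ i, (A i j * (x i * y i)
            + (t * (A i j * ((d.mulVec x) i * y i)) + t * (A i j * (x i * (d.mulVec y) i)))
            + t * (A i j * ((d.mulVec x) i * (t * (d.mulVec y) i)))) :=
      Finset.sum_congr rfl (fun i _ => by ring)
    rw [key, Finset.sum_add_distrib, Finset.sum_add_distrib, ← Finset.mul_sum, hz,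
      mul_zero, add_zero]
    congr 1
    rw [mul_add, Finset.mul_sum, Finset.mul_sum, ← Finset.sum_add_distrib]
end

section
/- Let E be the n-dimensional evolution algebra with e_i² = Σ_{j=i+1}^n a_{ij} e_j for i ≤ n-1 (with a_{i,i+1} ≠ 0 for all i < n) and e_n² = 0. Then E is nilpotent: E^m = 0 for m = 2^{n-1} + 1, where E^k = Σ_{i=1}^{⌊k/2⌋} E^i · E^{k-i}. -/
/-- Evolution product with structure matrix `A`. -/
def evolMul13 {N : ℕ} {K : Type*} [Field K] (A : Matrix (Fin N) (Fin N) K)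
    (x y : Fin N → K) : Fin N → K :=
  fun j => ∑ i, A i j * (x i * y i)

/-- Submodule of vectors whose first `t` coordinates vanish. -/
def Wsub13 (K : Type*) [Field K] (N t : ℕ) : Submodule K (Fin N → K) where
  carrier := {x | ∀ j : Fin N, (j : ℕ) < t → x j = 0}
  add_mem' hx hy j hj := by simp [Set.mem_setOf_eq] at *; simp [hx j hj, hy j hj]
  zero_mem' j hj := rfl
  smul_mem' c x hx j hj := by simp [Set.mem_setOf_eq] at *; simp [hx j hj]

lemma mul_mem_Wsub13 {n : ℕ} {K : Type*} [Field K]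
    (A : Matrix (Fin (n+1)) (Fin (n+1)) K)
    (hupper : ∀ i j : Fin (n+1), (j : ℕ) ≤ (i : ℕ) → A i j = 0)
    (t : ℕ) (u v : Fin (n+1) → K) (hv : v ∈ Wsub13 K (n+1) t) :
    evolMul13 A u v ∈ Wsub13 K (n+1) (t+1) := by
  intro j hj
  unfold evolMul13
  apply Finset.sum_eq_zero
  intro i _
  by_cases hi : (i : ℕ) < t
  · rw [hv i hi]; ring
  · rw [hupper i j (by omega)]; ring

/-- the `(n+1)`-dimensional evolution algebra with
`e_i² = ∑_{j>i} a_{ij} e_j`, `a_{i,i+1} ≠ 0`, `e_n² = 0` is nilpotent with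
`E^m = 0` for `m = 2^n + 1`, where `E^1 = E` and
`E^k = ∑_{i=1}^{⌊k/2⌋} E^i · E^{k-i}`. -/
theorem evol_nilpotent {n : ℕ} {K : Type*} [Field K] [CharZero K]
    (A : Matrix (Fin (n+1)) (Fin (n+1)) K)
    (hupper : ∀ i j : Fin (n+1), (j : ℕ) ≤ (i : ℕ) → A i j = 0)
    (hsub : ∀ i : Fin n, A i.castSucc i.succ ≠ 0)
    (P : ℕ → Submodule K (Fin (n+1) → K))
    (hP1 : P 1 = ⊤)
    (hPk : ∀ k : ℕ, 2 ≤ k →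
      P k = ⨆ i ∈ Finset.Icc 1 (k / 2),
        Submodule.span K {z : Fin (n+1) → K |
          ∃ u ∈ P i, ∃ v ∈ P (k - i), z = evolMul13 A u v}) :
    P (2 ^ n + 1) = ⊥ := by
  have key : ∀ t k : ℕ, 2 ^ t + 1 ≤ k → P k ≤ Wsub13 K (n+1) (t+1) := by
    intro t
    induction t with
    | zero =>
      intro k hk
      rw [hPk k (by omega)]
      apply iSup₂_le
      intro i hi
      rw [Submodule.span_le]
      rintro z ⟨u, hu, v, hv, rfl⟩
      exact mul_mem_Wsub13 A hupper 0 u v (fun j hj => absurd hj (Nat.not_lt_zero _))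
    | succ t ih =>
      intro k hk
      rw [hPk k (by have := Nat.one_le_two_pow (n := t+1); omega)]
      apply iSup₂_le
      intro i hi
      rw [Submodule.span_le]
      rintro z ⟨u, hu, v, hv, rfl⟩
      have hi' : i ∈ Finset.Icc 1 (k / 2) := hi
      rw [Finset.mem_Icc] at hi'
      have hki : 2 ^ t + 1 ≤ k - i := by
        have h2 : 2 ^ (t+1) = 2 ^ t + 2 ^ t := by ring
        omega
      exact mul_mem_Wsub13 A hupper (t+1) u v (ih (k - i) hki hv)
  rw [eq_bot_iff]
  intro x hx
  have hx' := key n (2 ^ n + 1) le_rfl hx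
  have : x = 0 := funext fun j => hx' j (by omega)
  simp [this]
end
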